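/- arXiv:2509.07598 — 2 statements merged into one kernel-verified Lean document; each statement's English description precedes it below -/
import Mathlib

section
/- For every real x > 1, the identity Li₂(2-x) - Li₂(1/x) - (1/2)·Li₂(2x - x²) + π²/12 - (1/2)·ln²(x) = 0 holds, provided x ≤ 2 (so that all arguments lie in [-1,1]). -/
/-! The left-hand side, as a function of `x`, is continuous on `[1, 2]` and has zero derivative
on `(1, 2)`: since `1 - (2 - x) = x - 1`, `1 - 1/x = (x - 1)/x` and `1 - (2x - x²) = (x - 1)²`, the
`log (x - 1)` contributions of the three `Li₂` terms cancel, and the `log x` one cancels against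
the derivative of `log² x / 2`. So it equals its value at `x = 1`, namely `π²/12 - Li₂(1)/2`,
and `Li₂(1) = ζ(2) = π²/6` by integrating `-log (1 - t)/t = ∑ tⁿ/(n+1)` term by term. -/

open Real MeasureTheory

noncomputable def Li2 (x : ℝ) : ℝ := -∫ t in (0:ℝ)..x, Real.log (1 - t) / t

open Set

lemma neg_log_one_sub_le_two_mul {t : ℝ} (h0 : 0 ≤ t) (ht : t ≤ 1 / 2) : -log (1 - t) ≤ 2 * t := by
  have hpos : 0 < 1 - t := by linarith
  have h := one_sub_inv_le_log_of_pos hpos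
  have : (1 - t)⁻¹ ≤ 1 + 2 * t := by
    rw [inv_le_iff_one_le_mul₀ hpos]; nlinarith
  linarith

lemma abs_log_one_sub_div_le {t : ℝ} (ht : t ∈ Ioc (0 : ℝ) 1) :
    |log (1 - t) / t| ≤ 2 + 2 * |log (1 - t)| := by
  obtain ⟨h0, h1⟩ := ht
  rw [abs_div, abs_of_pos h0, div_le_iff₀ h0]
  rcases le_or_gt t (1 / 2) with hsmall | hlarge
  · have hlog : log (1 - t) ≤ 0 := log_nonpos (by linarith) (by linarith)
    rw [abs_of_nonpos hlog]
    nlinarith [neg_log_one_sub_le_two_mul h0.le hsmall, abs_nonneg (log (1 - t))]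
  · nlinarith [abs_nonneg (log (1 - t))]

lemma intervalIntegrable_log_one_sub_div :
    IntervalIntegrable (fun t => log (1 - t) / t) volume 0 1 := by
  have hlog : IntervalIntegrable (fun t => log (1 - t)) volume 0 1 := by
    simpa using ((intervalIntegral.intervalIntegrable_log' (a := 0) (b := 1)).comp_sub_left 1).symm
  refine ((intervalIntegrable_const (c := (2 : ℝ))).add (hlog.abs.const_mul 2)).mono_fun' ?_ ?_
  · exact ((measurable_log.comp (measurable_const.sub measurable_id)).div
      measurable_id).aestronglyMeasurable
  · rw [uIoc_of_le zero_le_one]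
    exact (ae_restrict_iff' measurableSet_Ioc).2
      (ae_of_all _ fun t ht => abs_log_one_sub_div_le ht)

lemma hasSum_pow_div_succ {t : ℝ} (h0 : t ≠ 0) (h1 : |t| < 1) :
    HasSum (fun n : ℕ => t ^ n / (n + 1)) (-log (1 - t) / t) := by
  have hterm (n : ℕ) : t ^ (n + 1) / (n + 1) / t = t ^ n / (n + 1) := by
    rw [pow_succ]; field_simp
  simpa only [hterm] using (hasSum_pow_div_log_of_abs_lt_one h1).div_const t

lemma hasSum_one_div_succ_sq : HasSum (fun n : ℕ => 1 / ((n : ℝ) + 1) ^ 2) (π ^ 2 / 6) := by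
  simpa using (hasSum_nat_add_iff' 1).2 hasSum_zeta_two

lemma integral_pow_div_succ (n : ℕ) :
    ∫ t in Ioo (0 : ℝ) 1, t ^ n / (n + 1) = 1 / ((n : ℝ) + 1) ^ 2 := by
  rw [← integral_Ioc_eq_integral_Ioo, ← intervalIntegral.integral_of_le zero_le_one,
    intervalIntegral.integral_div, integral_pow]
  field_simp
  simp

lemma integral_log_one_sub_div : ∫ t in Ioo (0 : ℝ) 1, log (1 - t) / t = -(π ^ 2 / 6) := by
  have hint (n : ℕ) : Integrable (fun t : ℝ => t ^ n / (n + 1)) (volume.restrict (Ioo 0 1)) :=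
    ((continuous_pow n).div_const _).integrableOn_Icc.mono_set Ioo_subset_Icc_self
  have hnorm (n : ℕ) : ∫ t in Ioo (0 : ℝ) 1, ‖t ^ n / (n + 1)‖ = 1 / ((n : ℝ) + 1) ^ 2 := by
    rw [← integral_pow_div_succ n]
    refine setIntegral_congr_fun measurableSet_Ioo fun t ht => ?_
    exact norm_of_nonneg (by have := ht.1; positivity)
  have hsum := hasSum_integral_of_summable_integral_norm hint
    (by simpa only [hnorm] using hasSum_one_div_succ_sq.summable)
  simp only [integral_pow_div_succ] at hsum
  have hseries : ∫ t in Ioo (0 : ℝ) 1, ∑' n : ℕ, t ^ n / (n + 1) =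
      -∫ t in Ioo (0 : ℝ) 1, log (1 - t) / t := by
    rw [← integral_neg]
    refine setIntegral_congr_fun measurableSet_Ioo fun t ht => ?_
    rw [(hasSum_pow_div_succ ht.1.ne' (by rw [abs_of_pos ht.1]; exact ht.2)).tsum_eq, neg_div]
  rw [hseries] at hsum
  linarith [hsum.unique hasSum_one_div_succ_sq]

lemma Li2_one : Li2 1 = π ^ 2 / 6 := by
  rw [Li2, intervalIntegral.integral_of_le zero_le_one, integral_Ioc_eq_integral_Ioo,
    integral_log_one_sub_div, neg_neg]

lemma continuousOn_Li2 : ContinuousOn Li2 (Icc 0 1) := by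
  have h := (intervalIntegral.continuousOn_primitive_interval'
    intervalIntegrable_log_one_sub_div left_mem_uIcc).neg
  rwa [uIcc_of_le zero_le_one] at h

lemma hasDerivAt_Li2 {u : ℝ} (h0 : 0 < u) (h1 : u < 1) :
    HasDerivAt Li2 (-(log (1 - u) / u)) u := by
  have hcont : ∀ v ∈ Ioo (0 : ℝ) 1, ContinuousAt (fun t => log (1 - t) / t) v := fun v hv =>
    ((continuousAt_const.sub continuousAt_id).log (sub_pos.2 hv.2).ne').div continuousAt_id
      hv.1.ne'
  have hint : IntervalIntegrable (fun t => log (1 - t) / t) volume 0 u :=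
    intervalIntegrable_log_one_sub_div.mono_set (by
      rw [uIcc_of_le h0.le, uIcc_of_le zero_le_one]; exact Icc_subset_Icc_right h1.le)
  exact (intervalIntegral.integral_hasDerivAt_right hint
    (ContinuousAt.stronglyMeasurableAtFilter isOpen_Ioo hcont u ⟨h0, h1⟩)
    (hcont u ⟨h0, h1⟩)).neg

noncomputable def secondFixedPointLHS (y : ℝ) : ℝ :=
  Li2 (2 - y) - Li2 (1 / y) - (1/2) * Li2 (2 * y - y ^ 2) + π ^ 2 / 12 - (1/2) * (log y) ^ 2

lemma hasDerivAt_secondFixedPointLHS {y : ℝ} (hy1 : 1 < y) (hy2 : y < 2) :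
    HasDerivAt secondFixedPointLHS 0 y := by
  have hy0 : y ≠ 0 := by positivity
  have hA := (hasDerivAt_Li2 (u := 2 - y) (by linarith) (by linarith)).comp y
    ((hasDerivAt_id' y).const_sub 2)
  have hB := (hasDerivAt_Li2 (u := 1 / y) (by positivity) ((div_lt_one (by positivity)).2 hy1)).comp
    y ((hasDerivAt_const y 1).div (hasDerivAt_id' y) hy0)
  have hC := (hasDerivAt_Li2 (u := 2 * y - y ^ 2) (by nlinarith) (by nlinarith)).comp y
    (((hasDerivAt_id' y).const_mul 2).sub (hasDerivAt_pow 2 y))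
  have hD := (hasDerivAt_log hy0).pow 2
  refine ((((hA.sub hB).sub (hC.const_mul _)).add_const _).sub (hD.const_mul _)).congr_deriv ?_
  have hy1' : y - 1 ≠ 0 := by linarith
  have h2y : 2 - y ≠ 0 := by linarith
  rw [show (1 : ℝ) - (2 - y) = y - 1 by ring, show 1 - 1 / y = (y - 1) / y by field_simp,
    show 1 - (2 * y - y ^ 2) = (y - 1) ^ 2 by ring, log_div hy1' hy0, log_pow]
  field_simp
  ring

lemma continuousOn_secondFixedPointLHS : ContinuousOn secondFixedPointLHS (Icc 1 2) := by
  have hLi2 {f : ℝ → ℝ} (hf : ContinuousOn f (Icc 1 2)) (hmaps : MapsTo f (Icc 1 2) (Icc 0 1)) :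
      ContinuousOn (fun y => Li2 (f y)) (Icc 1 2) :=
    continuousOn_Li2.comp hf hmaps
  have hpos : ∀ y ∈ Icc (1 : ℝ) 2, y ≠ 0 := fun y hy => by linarith [hy.1]
  have hA := hLi2 (f := fun y => 2 - y) (by fun_prop) fun y hy =>
    ⟨by linarith [hy.2], by linarith [hy.1]⟩
  have hB := hLi2 (f := fun y => 1 / y) (by fun_prop (disch := assumption)) fun y hy =>
    ⟨one_div_nonneg.2 (by linarith [hy.1]), div_le_one_of_le₀ hy.1 (by linarith [hy.1])⟩
  have hC := hLi2 (f := fun y => 2 * y - y ^ 2) (by fun_prop) fun y hy =>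
    ⟨by nlinarith [hy.1, hy.2], by nlinarith [hy.1, hy.2]⟩
  unfold secondFixedPointLHS
  fun_prop (disch := assumption)

lemma secondFixedPointLHS_one : secondFixedPointLHS 1 = 0 := by
  norm_num [secondFixedPointLHS, Li2_one]
  ring

theorem second_fixed_point_identity (x : ℝ) (hx1 : 1 < x) (hx2 : x ≤ 2) :
    Li2 (2 - x) - Li2 (1 / x) - (1/2) * Li2 (2 * x - x ^ 2)
      + Real.pi ^ 2 / 12 - (1/2) * (Real.log x) ^ 2 = 0 := by
  obtain ⟨-, -, hslope⟩ := exists_hasDerivAt_eq_slope secondFixedPointLHS (fun _ => 0) hx1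
    (continuousOn_secondFixedPointLHS.mono (Icc_subset_Icc_right hx2))
    (fun y hy => hasDerivAt_secondFixedPointLHS hy.1 (hy.2.trans_le hx2))
  rw [eq_comm, div_eq_zero_iff, sub_eq_zero, secondFixedPointLHS_one] at hslope
  exact hslope.resolve_right (by linarith)
end

section
/- Li₂(1/3) + (1/2)·Li₂(-3) + (1/2)·ln²(3) = 0. -/
open Real MeasureTheory

/-!
Landen's identity `Li₂ x + Li₂ (x / (x - 1)) = -log² (1 - x) / 2`, taken at `x = 1/3` and
`x = -3`, trades `Li₂ (1/3)` and `Li₂ (-3)` for `Li₂ (-1/2)` and `Li₂ (3/4)`. Euler's reflection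
(comparing the points `1/4` and `1/2`) and the duplication formula `Li₂ (x²) = 2 (Li₂ x + Li₂ (-x))`
at `x = 1/2` then eliminate every dilogarithm, leaving an identity between `log 2` and `log 3`.
Each functional equation is proved by showing that its derivative vanishes, using
`Li₂' x = -log (1 - x) / x`.
-/

open Set

@[simp]
theorem Li2_zero : Li2 0 = 0 := by
  simp [Li2]

/- The integrand has the junk value `0` at `t = 0`; replacing it by its continuous extension
`dslope` does not change the integral and makes `Li2` differentiable on `(-∞, 1)`. -/
theorem Li2_eq_neg_integral_dslope (x : ℝ) :
    Li2 x = -∫ t in (0:ℝ)..x, dslope (fun t => log (1 - t)) 0 t := by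
  rw [Li2, intervalIntegral.integral_congr_ae]
  filter_upwards [volume.ae_ne 0] with t ht _
  simp [dslope_of_ne _ ht, slope_def_field]

theorem continuousOn_dslope_log_one_sub :
    ContinuousOn (dslope (fun t => log (1 - t)) 0) (Iio 1) := by
  refine (continuousOn_dslope (Iio_mem_nhds one_pos)).2 ⟨?_, ?_⟩
  · exact (continuousOn_const.sub continuousOn_id).log fun t (ht : t < 1) => (sub_pos.2 ht).ne'
  · exact (differentiableAt_const _ |>.sub differentiableAt_id).log (by norm_num)

theorem hasDerivAt_Li2_s17 {x : ℝ} (hx : x < 1) :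
    HasDerivAt Li2 (-dslope (fun t => log (1 - t)) 0 x) x := by
  have hc := continuousOn_dslope_log_one_sub
  rw [show Li2 = _ from funext Li2_eq_neg_integral_dslope]
  exact (intervalIntegral.integral_hasDerivAt_right
    (hc.mono (ordConnected_Iio.uIcc_subset one_pos hx)).intervalIntegrable
    (hc.stronglyMeasurableAtFilter isOpen_Iio x hx) (hc.continuousAt (Iio_mem_nhds hx))).neg

theorem HasDerivAt.Li2 {f : ℝ → ℝ} {f' x : ℝ} (hf : HasDerivAt f f' x) (h0 : f x ≠ 0)
    (h1 : f x < 1) : HasDerivAt (fun y => Li2 (f y)) (-(Real.log (1 - f x) / f x) * f') x := by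
  refine ((hasDerivAt_Li2_s17 h1).comp x hf).congr_deriv ?_
  simp [dslope_of_ne _ h0, slope_def_field]

@[fun_prop]
theorem ContinuousAt.Li2 {f : ℝ → ℝ} {x : ℝ} (hf : ContinuousAt f x) (h : f x < 1) :
    ContinuousAt (fun y => Li2 (f y)) x :=
  (hasDerivAt_Li2_s17 h).continuousAt.comp hf

theorem eq_of_hasDerivAt_zero_off_countable {f : ℝ → ℝ} {I s : Set ℝ} [I.OrdConnected]
    {a b : ℝ} (ha : a ∈ I) (hb : b ∈ I) (hs : s.Countable) (hc : ContinuousOn f I)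
    (hd : ∀ x ∈ I \ s, HasDerivAt f 0 x) : f a = f b := by
  have hab := OrdConnected.uIcc_subset ‹_› ha hb
  have := integral_eq_of_hasDerivAt_off_countable f 0 hs (hc.mono hab)
    (fun x hx => hd x ⟨hab (uIoo_subset_uIcc_self hx.1), hx.2⟩) intervalIntegrable_const
  simp only [Pi.zero_apply, intervalIntegral.integral_zero] at this
  linarith

theorem Li2_add_Li2_div_sub_one {x : ℝ} (hx : x < 1) :
    Li2 x + Li2 (x / (x - 1)) = -log (1 - x) ^ 2 / 2 := by
  have hlt : ∀ y : ℝ, y < 1 → y / (y - 1) < 1 := fun y hy => by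
    rw [div_lt_one_of_neg (by linarith)]; linarith
  let F y := Li2 y + Li2 (y / (y - 1)) + log (1 - y) ^ 2 / 2
  have hc : ContinuousOn F (Iio 1) := fun y (hy : y < 1) => by
    have := hlt y hy
    have : y - 1 ≠ 0 := by linarith
    have : 1 - y ≠ 0 := by linarith
    exact ContinuousAt.continuousWithinAt (by fun_prop (disch := assumption))
  have hd : ∀ y ∈ Iio 1 \ {0}, HasDerivAt F 0 y := by
    rintro y ⟨hy1 : y < 1, hy0 : y ≠ 0⟩
    have hsub : y - 1 ≠ 0 := by linarith
    have hsub' : 1 - y ≠ 0 := by linarith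
    have hone : 1 - y / (y - 1) = (1 - y)⁻¹ := by field_simp; ring
    refine (((hasDerivAt_id' y).Li2 hy0 hy1).add (((hasDerivAt_id' y).div
      ((hasDerivAt_id' y).sub_const 1) hsub).Li2 (div_ne_zero hy0 hsub) (hlt y hy1)) |>.add
      ((((hasDerivAt_id' y).const_sub 1).log hsub').pow 2 |>.div_const 2)).congr_deriv ?_
    simp only [Pi.div_apply, hone, Real.log_inv]
    field_simp
    ring
  have := eq_of_hasDerivAt_zero_off_countable (mem_Iio.2 one_pos) hx (countable_singleton 0) hc hd
  simp only [F, Li2_zero, zero_div, sub_zero, log_one] at this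
  linarith

theorem Li2_sq {x : ℝ} (hx₀ : -1 < x) (hx₁ : x < 1) : Li2 (x ^ 2) = 2 * (Li2 x + Li2 (-x)) := by
  let F y := Li2 (y ^ 2) - 2 * (Li2 y + Li2 (-y))
  have hsq : ∀ y ∈ Ioo (-1 : ℝ) 1, y ^ 2 < 1 := fun y hy => by nlinarith [hy.1, hy.2]
  have hc : ContinuousOn F (Ioo (-1) 1) := fun y hy => by
    have := hsq y hy
    have : y < 1 := hy.2
    have : -y < 1 := by linarith [hy.1]
    exact ContinuousAt.continuousWithinAt (by fun_prop (disch := assumption))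
  have hd : ∀ y ∈ Ioo (-1) 1 \ {0}, HasDerivAt F 0 y := by
    rintro y ⟨hy, hy0 : y ≠ 0⟩
    have hlog : log (1 - y ^ 2) = log (1 - y) + log (1 + y) := by
      rw [show 1 - y ^ 2 = (1 - y) * (1 + y) by ring]
      exact Real.log_mul (by linarith [hy.2]) (by linarith [hy.1])
    refine (((hasDerivAt_pow 2 y).Li2 (pow_ne_zero 2 hy0) (hsq y hy)).sub
      ((((hasDerivAt_id' y).Li2 hy0 hy.2).add ((hasDerivAt_neg' y).Li2 (neg_ne_zero.2 hy0)
        (by linarith [hy.1]))).const_mul 2)).congr_deriv ?_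
    simp only [hlog, sub_neg_eq_add]
    field_simp
    ring
  have := eq_of_hasDerivAt_zero_off_countable (mem_Ioo.2 ⟨hx₀, hx₁⟩)
    (show (0:ℝ) ∈ Ioo (-1) 1 by norm_num) (countable_singleton 0) hc hd
  simp [F] at this
  linarith

theorem Li2_add_Li2_one_sub_add_log_mul_log_eq {x y : ℝ} (hx : x ∈ Ioo 0 1) (hy : y ∈ Ioo 0 1) :
    Li2 x + Li2 (1 - x) + log x * log (1 - x) = Li2 y + Li2 (1 - y) + log y * log (1 - y) := by
  let F z := Li2 z + Li2 (1 - z) + log z * log (1 - z)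
  have hd : ∀ z ∈ Ioo 0 1, HasDerivAt F 0 z := by
    rintro z ⟨hz₀, hz₁⟩
    have h1z : 1 - z ≠ 0 := by linarith
    refine (((hasDerivAt_id' z).Li2 hz₀.ne' hz₁).add (((hasDerivAt_id' z).const_sub 1).Li2 h1z
      (by linarith)) |>.add ((hasDerivAt_id' z).log hz₀.ne' |>.mul
        (((hasDerivAt_id' z).const_sub 1).log h1z))).congr_deriv ?_
    simp only [sub_sub_cancel]
    field_simp
    ring
  exact eq_of_hasDerivAt_zero_off_countable hx hy countable_empty
    (fun z hz => (hd z hz).continuousAt.continuousWithinAt) fun z hz => hd z hz.1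

theorem Li2_third :
    Li2 (1/3) + (1/2) * Li2 (-3) + (1/2) * (Real.log 3) ^ 2 = 0 := by
  have landen_third := Li2_add_Li2_div_sub_one (x := 1/3) (by norm_num)
  have landen_neg_three := Li2_add_Li2_div_sub_one (x := -3) (by norm_num)
  have reflection := Li2_add_Li2_one_sub_add_log_mul_log_eq (x := 1/4) (y := 1/2)
    (by norm_num) (by norm_num)
  have duplication := Li2_sq (x := 1/2) (by norm_num) (by norm_num)
  have log_four : log 4 = 2 * log 2 := by
    rw [show (4 : ℝ) = 2 ^ 2 by norm_num, Real.log_pow]; norm_num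
  norm_num [Real.log_div, log_four] at landen_third landen_neg_three reflection duplication
  linear_combination landen_third + landen_neg_three / 2 - reflection / 2 + duplication / 2
end
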